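/- arXiv:1401.5290 — 4 statements merged into one kernel-verified Lean document; each statement's English description precedes it below -/
import Mathlib

section
/- Let G be a group containing elements σ, δ, s, r such that σδ = δσ, σ⁻¹sσ = δ⁻¹sδ, and σ⁻¹rσ = r. Then for all n ≥ 0, σ⁻ⁿ(sr)ⁿσⁿ = (δ⁻ⁿsδⁿr)ⁿ in G. -/
/-
Write `t = σδ⁻¹`. The hypothesis on `s` says exactly that `t` commutes with `s`, and `t` commutes
with `δ`, so `σⁿ = tⁿδⁿ` and conjugating `s` by `σⁿ` is the same as conjugating it by `δⁿ`; `r`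
commutes with `σ`, hence with `σⁿ`. Conjugation by `σⁿ` is a homomorphism, so it sends `(sr)ⁿ` to
the `n`-th power of `(δ⁻ⁿsδⁿ) r`.
-/

theorem Commute.conj_pow_eq_of_conj_eq {G : Type*} [Group G] {σ δ x : G} (hσδ : Commute σ δ)
    (hx : σ⁻¹ * x * σ = δ⁻¹ * x * δ) (n : ℕ) :
    (σ ^ n)⁻¹ * x * σ ^ n = (δ ^ n)⁻¹ * x * δ ^ n := by
  have hx_comm : Commute x (σ * δ⁻¹) :=
    calc x * (σ * δ⁻¹) = σ * (σ⁻¹ * x * σ) * δ⁻¹ := by group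
      _ = σ * (δ⁻¹ * x * δ) * δ⁻¹ := by rw [hx]
      _ = σ * δ⁻¹ * x := by group
  have hσ_pow : σ ^ n = (σ * δ⁻¹) ^ n * δ ^ n := by
    rw [← (hσδ.mul_left (Commute.refl δ).inv_left).mul_pow, inv_mul_cancel_right]
  calc (σ ^ n)⁻¹ * x * σ ^ n
      = (δ ^ n)⁻¹ * (((σ * δ⁻¹) ^ n)⁻¹ * x * (σ * δ⁻¹) ^ n) * δ ^ n := by
        rw [hσ_pow]; group
    _ = (δ ^ n)⁻¹ * x * δ ^ n := by
        rw [(hx_comm.pow_right n).symm.inv_mul_cancel]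

theorem inv_mul_pow_mul {G : Type*} [Group G] (g x : G) (n : ℕ) :
    (g⁻¹ * x * g) ^ n = g⁻¹ * x ^ n * g := by
  simpa using conj_pow (a := g⁻¹) (b := x) (i := n)

theorem stmt_0 {G : Type*} [Group G] (σ δ s r : G)
    (h1 : σ * δ = δ * σ) (h2 : σ⁻¹ * s * σ = δ⁻¹ * s * δ) (h3 : σ⁻¹ * r * σ = r) :
    ∀ n : ℕ, (σ ^ n)⁻¹ * (s * r) ^ n * σ ^ n = ((δ ^ n)⁻¹ * s * δ ^ n * r) ^ n := by
  intro n
  have hr : Commute r σ := by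
    simpa [commute_iff_eq, mul_assoc, inv_mul_eq_iff_eq_mul] using h3
  have hsr : (σ ^ n)⁻¹ * (s * r) * σ ^ n = (δ ^ n)⁻¹ * s * δ ^ n * r :=
    calc (σ ^ n)⁻¹ * (s * r) * σ ^ n
        = ((σ ^ n)⁻¹ * s * σ ^ n) * ((σ ^ n)⁻¹ * r * σ ^ n) := by group
      _ = (δ ^ n)⁻¹ * s * δ ^ n * r := by
        rw [Commute.conj_pow_eq_of_conj_eq h1 h2, (hr.pow_right n).symm.inv_mul_cancel]
  rw [← hsr, inv_mul_pow_mul]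
end

section
/- Let G be a group containing elements σ, δ, s, r such that σδ = δσ, σ⁻¹rσ = δ⁻¹rδ, and σ⁻¹sσ = s. Then for all n ≥ 0, σ⁻ⁿ(δ⁻ⁿsδⁿr)ⁿσⁿ = δ⁻ⁿ(sr)ⁿδⁿ in G. -/
/-! Conjugation by `σⁿ` is an automorphism. Since `σ` and `δ` commute, it fixes `s` and
`δ⁻ⁿ s δⁿ` and sends `r` to `δ⁻ⁿ r δⁿ`, so it maps `δ⁻ⁿ s δⁿ r` to `δ⁻ⁿ (s r) δⁿ`; the claim
follows by taking `n`-th powers. -/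

section Conjugation

variable {G : Type*} [Group G]

theorem Commute.inv_conj_comm {a b : G} (h : Commute a b) (x : G) :
    a⁻¹ * (b⁻¹ * x * b) * a = b⁻¹ * (a⁻¹ * x * a) * b := by
  calc a⁻¹ * (b⁻¹ * x * b) * a = (b * a)⁻¹ * x * (b * a) := by group
    _ = (a * b)⁻¹ * x * (a * b) := by rw [h.eq]
    _ = b⁻¹ * (a⁻¹ * x * a) * b := by group

theorem Commute.inv_conj_pow_eq_of_inv_conj_eq {a b x : G} (h : Commute a b)
    (hx : a⁻¹ * x * a = b⁻¹ * x * b) (n : ℕ) :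
    (a ^ n)⁻¹ * x * a ^ n = (b ^ n)⁻¹ * x * b ^ n := by
  induction n with
  | zero => simp
  | succ k ih =>
    calc (a ^ (k + 1))⁻¹ * x * a ^ (k + 1) = a⁻¹ * ((a ^ k)⁻¹ * x * a ^ k) * a := by
          rw [pow_succ]; group
      _ = (b ^ k)⁻¹ * (a⁻¹ * x * a) * b ^ k := by
          rw [ih, (h.pow_right k).inv_conj_comm]
      _ = (b ^ (k + 1))⁻¹ * x * b ^ (k + 1) := by rw [hx, pow_succ']; group

end Conjugation

theorem stmt_1 {G : Type*} [Group G] (σ δ s r : G)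
    (h1 : σ * δ = δ * σ) (h2 : σ⁻¹ * r * σ = δ⁻¹ * r * δ) (h3 : σ⁻¹ * s * σ = s) :
    ∀ n : ℕ, (σ ^ n)⁻¹ * ((δ ^ n)⁻¹ * s * δ ^ n * r) ^ n * σ ^ n
      = (δ ^ n)⁻¹ * (s * r) ^ n * δ ^ n := by
  intro n
  have hσδ : Commute σ δ := h1
  have hs : (σ ^ n)⁻¹ * s * σ ^ n = s := by
    simpa using (Commute.one_right σ).inv_conj_pow_eq_of_inv_conj_eq (by simpa using h3) n
  have hr : (σ ^ n)⁻¹ * r * σ ^ n = (δ ^ n)⁻¹ * r * δ ^ n := hσδ.inv_conj_pow_eq_of_inv_conj_eq h2 n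
  have hs' : (σ ^ n)⁻¹ * ((δ ^ n)⁻¹ * s * δ ^ n) * σ ^ n = (δ ^ n)⁻¹ * s * δ ^ n := by
    rw [(hσδ.pow_pow n n).inv_conj_comm, hs]
  simp only [← MulAut.conj_symm_apply] at hr hs' ⊢
  rw [map_pow, map_mul, hs', hr, ← map_mul, ← map_pow]
end

section
/- Let G be a group containing elements σ₁, σ₄, δ, s, r satisfying: σ₁δ = δσ₁, σ₄δ = δσ₄, σ₁⁻¹rσ₁ = δ⁻¹rδ, σ₁⁻¹sσ₁ = s, σ₄⁻¹sσ₄ = δ⁻¹sδ, σ₄⁻¹rσ₄ = r. Then for all n ≥ 0, σ₁⁻ⁿσ₄⁻ⁿ(sr)ⁿσ₄ⁿσ₁ⁿ = δ⁻ⁿ(sr)ⁿδⁿ in G. -/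
/-!
Conjugation by `g` and by `h` agree on `x` exactly when `h * g⁻¹` commutes with `x`, so each
hypothesis says that some element commutes with `s` or with `r`. Since `σ₁` and `σ₄` commute
with `δ`, the element `δⁿ (σ₄ⁿ σ₁ⁿ)⁻¹` factors as `σ₁⁻ⁿ (δ σ₄⁻¹)ⁿ` and as `(δ σ₁⁻¹)ⁿ σ₄⁻ⁿ`,
products of elements commuting with `s`, respectively with `r`; hence it commutes with `(s r)ⁿ`.
-/

theorem inv_mul_mul_eq_iff_commute {G : Type*} [Group G] {g h x : G} :
    g⁻¹ * x * g = h⁻¹ * x * h ↔ Commute (h * g⁻¹) x := by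
  constructor
  · intro H
    calc h * g⁻¹ * x = h * (g⁻¹ * x * g) * g⁻¹ := by group
      _ = h * (h⁻¹ * x * h) * g⁻¹ := by rw [H]
      _ = x * (h * g⁻¹) := by group
  · intro H
    calc g⁻¹ * x * g = h⁻¹ * (h * g⁻¹ * x) * g := by group
      _ = h⁻¹ * (x * (h * g⁻¹)) * g := by rw [H.eq]
      _ = h⁻¹ * x * h := by group

theorem commute_of_inv_mul_mul_eq_self {G : Type*} [Group G] {g x : G}
    (h : g⁻¹ * x * g = x) : Commute g x :=
  calc g * x = g * (g⁻¹ * x * g) := by rw [h]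
    _ = x * g := by group

theorem Commute.pow_mul_inv_pow {G : Type*} [Group G] {a d : G} (hc : Commute a d) (n : ℕ) :
    d ^ n * (a ^ n)⁻¹ = (d * a⁻¹) ^ n := by
  rw [hc.symm.inv_right.mul_pow, inv_pow]

theorem stmt_2 {G : Type*} [Group G] (σ₁ σ₄ δ s r : G)
    (h1 : σ₁ * δ = δ * σ₁) (h2 : σ₄ * δ = δ * σ₄)
    (h3 : σ₁⁻¹ * r * σ₁ = δ⁻¹ * r * δ) (h4 : σ₁⁻¹ * s * σ₁ = s)
    (h5 : σ₄⁻¹ * s * σ₄ = δ⁻¹ * s * δ) (h6 : σ₄⁻¹ * r * σ₄ = r) :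
    ∀ n : ℕ, (σ₁ ^ n)⁻¹ * (σ₄ ^ n)⁻¹ * (s * r) ^ n * σ₄ ^ n * σ₁ ^ n
      = (δ ^ n)⁻¹ * (s * r) ^ n * δ ^ n := by
  intro n
  have hσ₁δ : Commute σ₁ δ := h1
  have hσ₄δ : Commute σ₄ δ := h2
  have hr : Commute (δ * σ₁⁻¹) r := inv_mul_mul_eq_iff_commute.1 h3
  have hs : Commute (δ * σ₄⁻¹) s := inv_mul_mul_eq_iff_commute.1 h5
  have hσ₁s : Commute σ₁ s := commute_of_inv_mul_mul_eq_self h4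
  have hσ₄r : Commute σ₄ r := commute_of_inv_mul_mul_eq_self h6
  have hs' : Commute (δ ^ n * (σ₄ ^ n * σ₁ ^ n)⁻¹) s := by
    rw [mul_inv_rev, ← mul_assoc, ← (hσ₁δ.pow_pow n n).inv_left.eq, mul_assoc,
      hσ₄δ.pow_mul_inv_pow]
    exact (hσ₁s.pow_left n).inv_left.mul_left (hs.pow_left n)
  have hr' : Commute (δ ^ n * (σ₄ ^ n * σ₁ ^ n)⁻¹) r := by
    rw [mul_inv_rev, ← mul_assoc, hσ₁δ.pow_mul_inv_pow]
    exact (hr.pow_left n).mul_left (hσ₄r.pow_left n).inv_left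
  have key := inv_mul_mul_eq_iff_commute.2 ((hs'.mul_right hr').pow_right n)
  rw [mul_inv_rev] at key
  simpa only [mul_assoc] using key
end

section
/- Let G be a group with elements σ₁, σ₄, δ, s, r satisfying the six relations of Lemma 1 (σᵢ commute with δ; σ₁⁻¹rσ₁ = δ⁻¹rδ, σ₁⁻¹sσ₁ = s; σ₄⁻¹sσ₄ = δ⁻¹sδ, σ₄⁻¹rσ₄ = r). Then for all n, the word uₙ = σ₁⁻ⁿσ₄⁻ⁿ(sr)ⁿσ₄ⁿσ₁ⁿ · (δ⁻ⁿ(sr)ⁿδⁿ)⁻¹ equals the identity in G. -/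
private lemma comm_pow {G : Type*} [Group G] (a b : G) (hc : a * b = b * a) :
    ∀ n : ℕ, a * b ^ n = b ^ n * a := by
  intro n
  induction n with
  | zero => simp
  | succ m ihm => rw [pow_succ, ← mul_assoc, ihm, mul_assoc, hc, ← mul_assoc]

private lemma conj_pow_eq {G : Type*} [Group G] (a b x : G)
    (hc : a * b = b * a) (h : a⁻¹ * x * a = b⁻¹ * x * b) :
    ∀ n : ℕ, (a ^ n)⁻¹ * x * a ^ n = (b ^ n)⁻¹ * x * b ^ n := by
  intro n
  induction n with
  | zero => simp
  | succ n ih =>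
    have hcn : a * b ^ n = b ^ n * a := comm_pow a b hc n
    calc (a ^ (n+1))⁻¹ * x * a ^ (n+1)
        = a⁻¹ * ((a ^ n)⁻¹ * x * a ^ n) * a := by rw [pow_succ]; group
      _ = a⁻¹ * ((b ^ n)⁻¹ * x * b ^ n) * a := by rw [ih]
      _ = (b ^ n * a)⁻¹ * x * (b ^ n * a) := by group
      _ = (a * b ^ n)⁻¹ * x * (a * b ^ n) := by rw [← hcn]
      _ = (b ^ n)⁻¹ * (a⁻¹ * x * a) * b ^ n := by group
      _ = (b ^ n)⁻¹ * (b⁻¹ * x * b) * b ^ n := by rw [h]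
      _ = (b ^ (n+1))⁻¹ * x * b ^ (n+1) := by rw [pow_succ]; group

private lemma conj_mul_eq {G : Type*} [Group G] (g x y : G) :
    g⁻¹ * (x * y) * g = (g⁻¹ * x * g) * (g⁻¹ * y * g) := by group

private lemma conj_npow_eq {G : Type*} [Group G] (g x : G) (n : ℕ) :
    g⁻¹ * x ^ n * g = (g⁻¹ * x * g) ^ n := by
  induction n with
  | zero => simp
  | succ n ih => rw [pow_succ, pow_succ, ← ih]; group

theorem stmt_12 {G : Type*} [Group G] (σ₁ σ₄ δ s r : G)
    (h1 : σ₁ * δ = δ * σ₁) (h2 : σ₄ * δ = δ * σ₄)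
    (h3 : σ₁⁻¹ * r * σ₁ = δ⁻¹ * r * δ) (h4 : σ₁⁻¹ * s * σ₁ = s)
    (h5 : σ₄⁻¹ * s * σ₄ = δ⁻¹ * s * δ) (h6 : σ₄⁻¹ * r * σ₄ = r) :
    ∀ n : ℕ,
      (σ₁ ^ n)⁻¹ * (σ₄ ^ n)⁻¹ * (s * r) ^ n * σ₄ ^ n * σ₁ ^ n
        * ((δ ^ n)⁻¹ * (s * r) ^ n * δ ^ n)⁻¹ = 1 := by
  intro n
  have A : (σ₁ ^ n)⁻¹ * r * σ₁ ^ n = (δ ^ n)⁻¹ * r * δ ^ n :=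
    conj_pow_eq σ₁ δ r h1 h3 n
  have B : (σ₁ ^ n)⁻¹ * s * σ₁ ^ n = s := by
    have := conj_pow_eq σ₁ 1 s (by simp) (by simpa using h4) n
    simpa using this
  have C : (σ₄ ^ n)⁻¹ * s * σ₄ ^ n = (δ ^ n)⁻¹ * s * δ ^ n :=
    conj_pow_eq σ₄ δ s h2 h5 n
  have D : (σ₄ ^ n)⁻¹ * r * σ₄ ^ n = r := by
    have := conj_pow_eq σ₄ 1 r (by simp) (by simpa using h6) n
    simpa using this
  have hcn : σ₁ ^ n * δ ^ n = δ ^ n * σ₁ ^ n := by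
    have hc : Commute σ₁ δ := h1
    exact (hc.pow_pow n n)
  -- step 1: conjugate (s*r)^n by σ₄^n
  have S1 : (σ₄ ^ n)⁻¹ * (s * r) ^ n * σ₄ ^ n
      = (((δ ^ n)⁻¹ * s * δ ^ n) * r) ^ n := by
    rw [conj_npow_eq, conj_mul_eq, C, D]
  -- conjugating δ-conjugates of s by σ₁^n fixes them
  have E : (σ₁ ^ n)⁻¹ * ((δ ^ n)⁻¹ * s * δ ^ n) * σ₁ ^ n
      = (δ ^ n)⁻¹ * s * δ ^ n := by
    calc (σ₁ ^ n)⁻¹ * ((δ ^ n)⁻¹ * s * δ ^ n) * σ₁ ^ n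
        = (δ ^ n * σ₁ ^ n)⁻¹ * s * (δ ^ n * σ₁ ^ n) := by group
      _ = (σ₁ ^ n * δ ^ n)⁻¹ * s * (σ₁ ^ n * δ ^ n) := by rw [← hcn]
      _ = (δ ^ n)⁻¹ * ((σ₁ ^ n)⁻¹ * s * σ₁ ^ n) * δ ^ n := by group
      _ = (δ ^ n)⁻¹ * s * δ ^ n := by rw [B]
  -- step 2: conjugate result by σ₁^n
  have S2 : (σ₁ ^ n)⁻¹ * ((((δ ^ n)⁻¹ * s * δ ^ n) * r) ^ n) * σ₁ ^ n
      = (δ ^ n)⁻¹ * (s * r) ^ n * δ ^ n := by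
    rw [conj_npow_eq, conj_mul_eq, E, A,
      show (δ ^ n)⁻¹ * s * δ ^ n * ((δ ^ n)⁻¹ * r * δ ^ n)
          = (δ ^ n)⁻¹ * (s * r) * δ ^ n from by group,
      ← conj_npow_eq]
  have key : (σ₁ ^ n)⁻¹ * (σ₄ ^ n)⁻¹ * (s * r) ^ n * σ₄ ^ n * σ₁ ^ n
      = (δ ^ n)⁻¹ * (s * r) ^ n * δ ^ n := by
    calc (σ₁ ^ n)⁻¹ * (σ₄ ^ n)⁻¹ * (s * r) ^ n * σ₄ ^ n * σ₁ ^ n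
        = (σ₁ ^ n)⁻¹ * ((σ₄ ^ n)⁻¹ * (s * r) ^ n * σ₄ ^ n) * σ₁ ^ n := by group
      _ = (σ₁ ^ n)⁻¹ * ((((δ ^ n)⁻¹ * s * δ ^ n) * r) ^ n) * σ₁ ^ n := by rw [S1]
      _ = (δ ^ n)⁻¹ * (s * r) ^ n * δ ^ n := S2
  rw [key, mul_inv_cancel]
end
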